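/- Let d be a positive integer, α ∈ (0,2), β > 0, s ∈ [0,d], and let μ be a nonzero finite Borel measure on ℝ^d with compact support S satisfying condition (F2)-s with constant C̲. Then there is a constant c₀ > 0, depending only on α and d, such that for every k > 0, every t > 0 and every x ∈ S, h_k(t,x) ≥ C̲ · c₀ · k · t^{-1/β}. -/

import Mathlib

open MeasureTheory Metric Set

/-- The profile function `W(r) = log(e + r²)/(1 + r^{d+α})`. -/
noncomputable def Wfn (d : ℕ) (α r : ℝ) : ℝ :=
  Real.log (Real.exp 1 + r ^ 2) / (1 + r ^ ((d : ℝ) + α))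

/-- `w_t(x) = t^{-1/β}(1 + t^{-s/α}) W(t^{-1/α}|x|)`. -/
noncomputable def wfn (d : ℕ) (α β s t : ℝ) (x : EuclideanSpace ℝ (Fin d)) : ℝ :=
  t ^ (-(1:ℝ)/β) * (1 + t ^ (-s/α)) * Wfn d α (t ^ (-(1:ℝ)/α) * ‖x‖)

/-- `h_k(t,x) = k ∫ w_t(x - y) dμ(y)`. -/
noncomputable def hfn (d : ℕ) (α β s : ℝ) (μ : Measure (EuclideanSpace ℝ (Fin d)))
    (k t : ℝ) (x : EuclideanSpace ℝ (Fin d)) : ℝ :=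
  k * ∫ y, wfn d α β s t (x - y) ∂μ

/-- `S` is the closed support of `μ`. -/
def IsSupportOf (d : ℕ) (μ : Measure (EuclideanSpace ℝ (Fin d)))
    (S : Set (EuclideanSpace ℝ (Fin d))) : Prop :=
  IsClosed S ∧ μ Sᶜ = 0 ∧ ∀ x ∈ S, ∀ r : ℝ, 0 < r → 0 < μ (ball x r)

/-- Condition (F2)-s with constant `Cund` on the set `S`. -/
def IsF2 (d : ℕ) (μ : Measure (EuclideanSpace ℝ (Fin d)))
    (S : Set (EuclideanSpace ℝ (Fin d))) (Cund s : ℝ) : Prop :=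
  ∀ x ∈ S, ∀ r : ℝ, 0 < r → r ≤ 1 →
    ENNReal.ofReal (Cund * r ^ s) ≤ μ (closedBall x r)

/-!
Proof idea: `W ≥ 1/2` on `[0, 1]`, so `w_t ≥ t^{-1/β}(1 + t^{-s/α})/2` on the ball of radius
`r = min(t^{1/α}, 1)`. By (F2) this ball has `μ`-mass at least `C̲ r^s`, and the choice of `r`
makes `(1 + t^{-s/α}) r^s ≥ 1`; hence `c₀ = 1/2` works.
-/

lemma one_le_log_exp_one_add_sq (r : ℝ) : 1 ≤ Real.log (Real.exp 1 + r ^ 2) := by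
  rw [Real.le_log_iff_exp_le (by positivity)]
  nlinarith [sq_nonneg r]

lemma Wfn_nonneg (d : ℕ) (α : ℝ) {r : ℝ} (hr : 0 ≤ r) : 0 ≤ Wfn d α r :=
  div_nonneg (zero_le_one.trans (one_le_log_exp_one_add_sq r)) (by positivity)

lemma one_half_le_Wfn (d : ℕ) {α r : ℝ} (hα : 0 ≤ α) (hr₀ : 0 ≤ r) (hr₁ : r ≤ 1) :
    1 / 2 ≤ Wfn d α r := by
  have hpow : r ^ ((d : ℝ) + α) ≤ 1 := Real.rpow_le_one hr₀ hr₁ (by positivity)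
  rw [Wfn, le_div_iff₀ (by positivity)]
  linarith [one_le_log_exp_one_add_sq r]

lemma continuousOn_Wfn (d : ℕ) {α : ℝ} (hα : 0 ≤ α) : ContinuousOn (Wfn d α) (Ici 0) := by
  refine ContinuousOn.div (Continuous.continuousOn ?_)
    (continuous_const.add (Real.continuous_rpow_const (by positivity))).continuousOn
    fun r hr ↦ by have := Real.rpow_nonneg (mem_Ici.mp hr) ((d : ℝ) + α); positivity
  exact continuous_const.add (continuous_pow 2) |>.log fun r ↦
    (by positivity : 0 < Real.exp 1 + r ^ 2).ne'

lemma continuous_wfn (d : ℕ) {α t : ℝ} (hα : 0 ≤ α) (ht : 0 ≤ t) (β s : ℝ) :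
    Continuous (wfn d α β s t) :=
  continuous_const.mul <| (continuousOn_Wfn d hα).comp_continuous
    (continuous_const.mul continuous_norm) fun x ↦
      mul_nonneg (Real.rpow_nonneg ht _) (norm_nonneg x)

lemma wfn_nonneg (d : ℕ) (α β s : ℝ) {t : ℝ} (ht : 0 ≤ t) (x : EuclideanSpace ℝ (Fin d)) :
    0 ≤ wfn d α β s t x := by
  have := Real.rpow_nonneg ht (-s / α)
  exact mul_nonneg (by positivity)
    (Wfn_nonneg d α (mul_nonneg (Real.rpow_nonneg ht _) (norm_nonneg x)))

lemma wfn_ge_of_norm_le (d : ℕ) {α t : ℝ} (hα : 0 ≤ α) (ht : 0 < t) (β s : ℝ)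
    {x : EuclideanSpace ℝ (Fin d)} (hx : ‖x‖ ≤ t ^ (1 / α)) :
    t ^ (-1 / β) * (1 + t ^ (-s / α)) / 2 ≤ wfn d α β s t x := by
  have harg₁ : t ^ (-1 / α) * ‖x‖ ≤ 1 :=
    calc t ^ (-1 / α) * ‖x‖ ≤ t ^ (-1 / α) * t ^ (1 / α) := by gcongr
      _ = 1 := by rw [← Real.rpow_add ht, neg_div, neg_add_cancel, Real.rpow_zero]
  have hW := one_half_le_Wfn d hα (by positivity) harg₁
  have := Real.rpow_nonneg ht.le (-s / α)
  rw [wfn, div_eq_mul_one_div]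
  gcongr

lemma one_le_one_add_rpow_neg_mul_min_one_rpow {u : ℝ} (hu : 0 < u) (s : ℝ) :
    1 ≤ (1 + u ^ (-s)) * min u 1 ^ s := by
  rcases le_total u 1 with hu₁ | hu₁
  · rw [min_eq_left hu₁, add_mul, one_mul, ← Real.rpow_add hu, neg_add_cancel,
      Real.rpow_zero]
    linarith [Real.rpow_nonneg hu.le s]
  · rw [min_eq_right hu₁, Real.one_rpow, mul_one]
    linarith [Real.rpow_nonneg hu.le (-s)]

lemma Continuous.integrable_of_measure_compl_eq_zero {X : Type*} [TopologicalSpace X]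
    [T2Space X] [MeasurableSpace X] [OpensMeasurableSpace X] {μ : Measure X}
    [IsFiniteMeasureOnCompacts μ] {S : Set X} {f : X → ℝ} (hf : Continuous f)
    (hS : IsCompact S) (hμS : μ Sᶜ = 0) : Integrable f μ := by
  rw [← Measure.restrict_eq_self_of_ae_mem (mem_ae_iff.mpr hμS)]
  exact hf.continuousOn.integrableOn_compact hS

lemma IsF2.le_measureReal_closedBall {d : ℕ} {μ : Measure (EuclideanSpace ℝ (Fin d))}
    [IsFiniteMeasure μ] {S : Set (EuclideanSpace ℝ (Fin d))} {Cund s : ℝ}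
    (hF2 : IsF2 d μ S Cund s) {x : EuclideanSpace ℝ (Fin d)} (hx : x ∈ S) {r : ℝ}
    (hr₀ : 0 < r) (hr₁ : r ≤ 1) : Cund * r ^ s ≤ μ.real (closedBall x r) :=
  (ENNReal.ofReal_le_iff_le_toReal (measure_ne_top μ _)).mp (hF2 x hx r hr₀ hr₁)

lemma mul_measureReal_closedBall_le_integral_wfn {d : ℕ} {α t : ℝ} (hα : 0 ≤ α)
    (ht : 0 < t) (β s : ℝ) {μ : Measure (EuclideanSpace ℝ (Fin d))} [IsFiniteMeasure μ]
    {S : Set (EuclideanSpace ℝ (Fin d))} (hS : IsCompact S) (hμS : μ Sᶜ = 0)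
    (x : EuclideanSpace ℝ (Fin d)) {r : ℝ} (hr : r ≤ t ^ (1 / α)) :
    t ^ (-1 / β) * (1 + t ^ (-s / α)) / 2 * μ.real (closedBall x r)
      ≤ ∫ y, wfn d α β s t (x - y) ∂μ := by
  set c := t ^ (-1 / β) * (1 + t ^ (-s / α)) / 2
  have hc : 0 ≤ c := by have := Real.rpow_nonneg ht.le (-s / α); positivity
  have hball : closedBall x r ⊆ {y | c ≤ wfn d α β s t (x - y)} := fun y hy ↦
    wfn_ge_of_norm_le d hα ht β s <| by
      rw [← dist_eq_norm, dist_comm]; exact (mem_closedBall.mp hy).trans hr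
  calc c * μ.real (closedBall x r) ≤ c * μ.real {y | c ≤ wfn d α β s t (x - y)} :=
        mul_le_mul_of_nonneg_left (measureReal_mono hball (measure_ne_top μ _)) hc
    _ ≤ _ := mul_meas_ge_le_integral_of_nonneg
        (Filter.Eventually.of_forall fun y ↦ wfn_nonneg d α β s ht.le (x - y))
        (((continuous_wfn d hα ht.le β s).comp (continuous_const.sub continuous_id)
          ).integrable_of_measure_compl_eq_zero hS hμS) c

theorem stmt_1_general (d : ℕ) (α β s : ℝ) (hα : α ∈ Ioo (0:ℝ) 2)
    (μ : Measure (EuclideanSpace ℝ (Fin d))) [IsFiniteMeasure μ]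
    (S : Set (EuclideanSpace ℝ (Fin d))) (hScpt : IsCompact S)
    (hSsupp : IsSupportOf d μ S)
    (Cund : ℝ) (hCund : 0 < Cund) (hF2 : IsF2 d μ S Cund s) :
    ∃ c₀ > 0, ∀ k > (0:ℝ), ∀ t > (0:ℝ), ∀ x ∈ S,
      Cund * c₀ * k * t ^ (-(1:ℝ)/β) ≤ hfn d α β s μ k t x := by
  refine ⟨1 / 2, one_half_pos, fun k hk t ht x hx ↦ ?_⟩
  set r := min (t ^ (1 / α)) 1
  have hr₀ : 0 < r := lt_min (Real.rpow_pos_of_pos ht _) one_pos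
  have hscale : 1 ≤ (1 + t ^ (-s / α)) * r ^ s := by
    have h := one_le_one_add_rpow_neg_mul_min_one_rpow (Real.rpow_pos_of_pos ht (1 / α)) s
    rwa [← Real.rpow_mul ht.le, one_div_mul_eq_div] at h
  have hball := hF2.le_measureReal_closedBall hx hr₀ (min_le_right _ _)
  have hint := mul_measureReal_closedBall_le_integral_wfn hα.1.le ht β s hScpt hSsupp.2.1 x
    (min_le_left _ 1)
  rw [hfn]
  calc Cund * (1 / 2) * k * t ^ (-1 / β) = k * (t ^ (-1 / β) / 2 * Cund) := by ring
    _ ≤ k * (t ^ (-1 / β) / 2 * (Cund * ((1 + t ^ (-s / α)) * r ^ s))) := by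
        gcongr
        exact le_mul_of_one_le_right hCund.le hscale
    _ = k * (t ^ (-1 / β) * (1 + t ^ (-s / α)) / 2 * (Cund * r ^ s)) := by ring
    _ ≤ k * (t ^ (-1 / β) * (1 + t ^ (-s / α)) / 2 * μ.real (closedBall x r)) := by gcongr
    _ ≤ k * ∫ y, wfn d α β s t (x - y) ∂μ := by gcongr

/-- On the support, `h_k(t,x) ≥ C̲ c₀ k t^{-1/β}`. -/
theorem stmt_1 (d : ℕ) (hd : 0 < d) (α β s : ℝ) (hα : α ∈ Ioo (0:ℝ) 2)
    (hβ : 0 < β) (hs : s ∈ Icc (0:ℝ) (d:ℝ))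
    (μ : Measure (EuclideanSpace ℝ (Fin d))) [IsFiniteMeasure μ] (hμ : μ ≠ 0)
    (S : Set (EuclideanSpace ℝ (Fin d))) (hScpt : IsCompact S)
    (hSsupp : IsSupportOf d μ S)
    (Cund : ℝ) (hCund : 0 < Cund) (hF2 : IsF2 d μ S Cund s) :
    ∃ c₀ > 0, ∀ k > (0:ℝ), ∀ t > (0:ℝ), ∀ x ∈ S,
      Cund * c₀ * k * t ^ (-(1:ℝ)/β) ≤ hfn d α β s μ k t x :=
  stmt_1_general d α β s hα μ S hScpt hSsupp Cund hCund hF2
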